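/- arXiv:2604.00828 — 5 statements merged into one kernel-verified Lean document; each statement's English description precedes it below -/
import Mathlib

section
/- Let G be a finite simple undirected graph with T ≥ 1 four-cycles and let δ ∈ (0, 1/2]. Then at most 328·δ²·T four-cycles of G contain two or more edges of heaviness at least √T/(4δ²). -/
variable {V : Type*}

/-- `IsC4 G a b c d` : the four distinct vertices `a, b, c, d` trace a
four-cycle of `G` (in this cyclic order). -/
def IsC4 (G : SimpleGraph V) (a b c d : V) : Prop :=
  G.Adj a b ∧ G.Adj b c ∧ G.Adj c d ∧ G.Adj d a ∧
    a ≠ b ∧ a ≠ c ∧ a ≠ d ∧ b ≠ c ∧ b ≠ d ∧ c ≠ d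

/-- The four-cycles of `G`, each counted once as a subgraph: we take the unique
canonical representative `(a, b, c, d)` tracing the cycle with `a` minimal and
`b < d`. -/
def fourCycles [LinearOrder V] (G : SimpleGraph V) : Set (V × V × V × V) :=
  {t | IsC4 G t.1 t.2.1 t.2.2.1 t.2.2.2 ∧
    t.1 < t.2.1 ∧ t.1 < t.2.2.1 ∧ t.1 < t.2.2.2 ∧ t.2.1 < t.2.2.2}

/-- The vertices of a four-cycle. -/
def cycleVerts (t : V × V × V × V) : Set V := {t.1, t.2.1, t.2.2.1, t.2.2.2}

/-- The edges of a four-cycle. -/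
def cycleEdges (t : V × V × V × V) : Set (Sym2 V) :=
  {s(t.1, t.2.1), s(t.2.1, t.2.2.1), s(t.2.2.1, t.2.2.2), s(t.2.2.2, t.1)}

/-- The wedges (paths with two edges) of a four-cycle, each represented as a
pair (center vertex, unordered pair of endpoints). -/
def cycleWedges (t : V × V × V × V) : Set (V × Sym2 V) :=
  {(t.2.1, s(t.1, t.2.2.1)), (t.2.2.1, s(t.2.1, t.2.2.2)),
    (t.2.2.2, s(t.2.2.1, t.1)), (t.1, s(t.2.2.2, t.2.1))}

/-- The two pairs of opposite vertices of a four-cycle. -/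
def cycleOppPairs (t : V × V × V × V) : Set (Sym2 V) :=
  {s(t.1, t.2.2.1), s(t.2.1, t.2.2.2)}

/-- The vertices of a wedge. -/
def wedgeVerts (w : V × Sym2 V) : Set V := insert w.1 {x | x ∈ w.2}

/-- The two edges of a wedge. -/
def wedgeEdges (w : V × Sym2 V) : Set (Sym2 V) := {e | ∃ x ∈ w.2, e = s(w.1, x)}

/-- The heaviness of a vertex: the number of four-cycles of `G` containing it. -/
noncomputable def vertexHeaviness [LinearOrder V] (G : SimpleGraph V) (v : V) : ℕ :=
  {A ∈ fourCycles G | v ∈ cycleVerts A}.ncard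

/-- The heaviness of an edge: the number of four-cycles of `G` containing it. -/
noncomputable def edgeHeaviness [LinearOrder V] (G : SimpleGraph V) (e : Sym2 V) : ℕ :=
  {A ∈ fourCycles G | e ∈ cycleEdges A}.ncard

/-- The heaviness of a wedge: the number of four-cycles of `G` containing it. -/
noncomputable def wedgeHeaviness [LinearOrder V] (G : SimpleGraph V) (w : V × Sym2 V) : ℕ :=
  {A ∈ fourCycles G | w ∈ cycleWedges A}.ncard

/-- The onion width of a pair of vertices: the number of their common neighbours. -/
noncomputable def onionWidth (G : SimpleGraph V) (u v : V) : ℕ :=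
  {w | G.Adj u w ∧ G.Adj v w}.ncard

/-- The onion size of a pair of vertices: the number of four-cycles in which the
two vertices are opposite. -/
noncomputable def onionSize (G : SimpleGraph V) (u v : V) : ℕ :=
  Nat.choose (onionWidth G u v) 2

/-!
Let `H` be the graph of `θ`-heavy edges and `m` its number of edges. Every four-cycle has four
edges, so `m θ ≤ 4T`, i.e. `m ≤ 16 δ² √T`.

Read a four-cycle as `x v y w` with a marked diagonal `x < y`; every cycle has four such
readings. If two of its edges are heavy, some reading has `xv` heavy together with `yw` or with
`yv`. Readings of the first kind inject into pairs of darts of `H`, so there are at most `4m²`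
of them. Readings of the second kind number at most `∑_{x<y} a_{xy} (c_{xy} - 1)`, where `a` and
`c` count common `H`- and `G`-neighbours. By Cauchy–Schwarz this is at most `2m · 2√T`: `∑ a²`
counts pairs of `H`-wedges with common ends, which again inject into pairs of darts, and
`∑ c (c - 1)` counts all readings of all cycles. Hence at most `4m² + 4m√T ≤ 320 δ² T` cycles
carry two heavy edges.
-/

open Finset

lemma Finset.card_filter_offDiag_fst_mem_le {α : Type*} [DecidableEq α] (s t : Finset α) :
    #{q ∈ s.offDiag | q.1 ∈ t} ≤ #t * (#s - 1) := by
  calc #{q ∈ s.offDiag | q.1 ∈ t}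
      ≤ (#s - 1) * #(t ∩ s) := card_le_mul_card_image_of_maps_to (f := Prod.fst) ?_ _ ?_
    _ ≤ #t * (#s - 1) := by rw [mul_comm]; gcongr; exact inter_subset_left
  · intro q hq
    simp only [mem_filter, mem_offDiag] at hq
    exact mem_inter.mpr ⟨hq.2, hq.1.1⟩
  · intro a ha
    calc #{q ∈ {q ∈ s.offDiag | q.1 ∈ t} | q.1 = a}
        ≤ #({a} ×ˢ s.erase a) := card_le_card fun q hq => by
          simp only [mem_filter, mem_offDiag] at hq
          obtain ⟨⟨⟨-, hq2, hne⟩, -⟩, rfl⟩ := hq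
          exact mem_product.mpr ⟨mem_singleton_self _, mem_erase.mpr ⟨hne.symm, hq2⟩⟩
      _ = #s - 1 := by
        rw [card_product, card_singleton, one_mul, card_erase_of_mem (mem_inter.mp ha).2]

namespace FourCycle

/-- The four readings `⟨(x, y), (v, w)⟩`, as the cycle `x v y w`, of the cycle `a b c d`. -/
def root : V × V × V × V → Bool → Bool → Σ _ : V × V, V × V
  | (a, b, c, d), false, false => ⟨(a, c), (b, d)⟩
  | (a, b, c, d), false, true => ⟨(a, c), (d, b)⟩
  | (a, b, c, d), true, false => ⟨(b, d), (a, c)⟩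
  | (a, b, c, d), true, true => ⟨(b, d), (c, a)⟩

lemma exists_root_of_two_edges (H : SimpleGraph V) {A : V × V × V × V} {e f : Sym2 V}
    (he : e ∈ cycleEdges A) (hf : f ∈ cycleEdges A) (hef : e ≠ f) (hHe : e ∈ H.edgeSet)
    (hHf : f ∈ H.edgeSet) :
    ∃ i j, H.Adj (root A i j).1.1 (root A i j).2.1 ∧
      (H.Adj (root A i j).1.2 (root A i j).2.1 ∨ H.Adj (root A i j).1.2 (root A i j).2.2) := by
  obtain ⟨a, b, c, d⟩ := A
  simp only [cycleEdges, Set.mem_insert_iff, Set.mem_singleton_iff] at he hf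
  rcases he with rfl | rfl | rfl | rfl <;> rcases hf with rfl | rfl | rfl | rfl <;>
    simp only [SimpleGraph.mem_edgeSet] at hHe hHf <;>
    simp [Bool.exists_bool, root, hHe, hHf, hHe.symm, hHf.symm] at hef ⊢

section LinearOrder

variable [LinearOrder V] {G : SimpleGraph V}

/-- The representative in `fourCycles` of the cycle `x v y w`, provided `x < y`. -/
def canonical : (Σ _ : V × V, V × V) → V × V × V × V
  | ⟨(x, y), (v, w)⟩ =>
    if x < v ∧ x < w then (x, min v w, y, max v w) else (min v w, x, max v w, y)

lemma canonical_swap (x y v w : V) :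
    canonical ⟨(x, y), (v, w)⟩ = canonical ⟨(x, y), (w, v)⟩ := by
  simp only [canonical, and_comm, min_comm, max_comm]

lemma canonical_mem_fourCycles {x y v w : V} (hxy : x < y) (hvw : v ≠ w) (hxv : G.Adj x v)
    (hyv : G.Adj y v) (hxw : G.Adj x w) (hyw : G.Adj y w) :
    canonical ⟨(x, y), (v, w)⟩ ∈ fourCycles G := by
  wlog hlt : v < w generalizing v w
  · rw [canonical_swap]
    exact this hvw.symm hxw hyw hxv hyv (hvw.lt_or_gt.resolve_left hlt)
  by_cases hx : x < v
  · rw [canonical, if_pos ⟨hx, hx.trans hlt⟩, min_eq_left hlt.le, max_eq_right hlt.le]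
    exact ⟨⟨hxv, hyv.symm, hyw, hxw.symm, hxv.ne, hxy.ne, hxw.ne, hyv.ne', hvw, hyw.ne⟩,
      hx, hxy, hx.trans hlt, hlt⟩
  · have hvx : v < x := lt_of_le_of_ne (not_lt.mp hx) hxv.ne'
    rw [canonical, if_neg (fun h => hx h.1), min_eq_left hlt.le, max_eq_right hlt.le]
    exact ⟨⟨hxv.symm, hxw, hyw.symm, hyv, hxv.ne', hvw, hyv.ne', hxw.ne, hxy.ne, hyw.ne'⟩,
      hvx, hlt, hvx.trans hxy, hxy⟩

lemma canonical_root {A : V × V × V × V} (hA : A ∈ fourCycles G) (i j : Bool) :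
    canonical (root A i j) = A := by
  obtain ⟨a, b, c, d⟩ := A
  obtain ⟨-, hab, hac, had, hbd⟩ := hA
  cases i <;> cases j <;> simp [root, canonical, hab, had, hbd.le, hac.le, hab.not_gt]

lemma exists_root_canonical {x y v w : V} (hvw : v ≠ w) :
    ∃ i j, root (canonical ⟨(x, y), (v, w)⟩) i j = ⟨(x, y), (v, w)⟩ := by
  rcases hvw.lt_or_gt with h | h <;> by_cases hx : x < v ∧ x < w
  · exact ⟨false, false, by simp [canonical, hx, h.le, root]⟩
  · exact ⟨true, false, by simp [canonical, hx, h.le, root]⟩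
  · exact ⟨false, true, by simp [canonical, hx, h.le, root]⟩
  · exact ⟨true, true, by simp [canonical, hx, h.le, root]⟩

lemma cycleEdges_subset_edgeSet {A : V × V × V × V} (hA : A ∈ fourCycles G) :
    cycleEdges A ⊆ G.edgeSet := by
  obtain ⟨a, b, c, d⟩ := A
  obtain ⟨⟨hab, hbc, hcd, hda, -⟩, -⟩ := hA
  simp [cycleEdges, Set.insert_subset_iff, hab, hbc, hcd, hda]

noncomputable def heavyGraph (G : SimpleGraph V) (θ : ℝ) : SimpleGraph V :=
  SimpleGraph.fromEdgeSet {e | θ ≤ edgeHeaviness G e}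

lemma mem_edgeSet_heavyGraph {θ : ℝ} {A : V × V × V × V} (hA : A ∈ fourCycles G) {e : Sym2 V}
    (he : e ∈ cycleEdges A) (hθ : θ ≤ edgeHeaviness G e) : e ∈ (heavyGraph G θ).edgeSet := by
  rw [heavyGraph, SimpleGraph.edgeSet_fromEdgeSet]
  exact ⟨hθ, G.not_isDiag_of_mem_edgeSet (cycleEdges_subset_edgeSet hA he)⟩

end LinearOrder

section Counting

open scoped Classical

variable [Fintype V]

lemma card_le_sq_of_forall_adj (H : SimpleGraph V) [Fintype H.edgeSet]
    (S : Finset (Σ _ : V × V, V × V)) (hS : ∀ r ∈ S, H.Adj r.1.1 r.2.1 ∧ H.Adj r.1.2 r.2.2) :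
    #S ≤ (2 * #H.edgeFinset) ^ 2 := by
  have hdart : Fintype.card H.Dart = 2 * #H.edgeFinset := by
    convert H.dart_card_eq_twice_card_edges
  rw [← hdart, sq, ← Fintype.card_prod, ← Fintype.card_coe]
  refine Fintype.card_le_of_injective
    (fun r => (⟨(r.1.1.1, r.1.2.1), (hS r r.2).1⟩, ⟨(r.1.1.2, r.1.2.2), (hS r r.2).2⟩)) ?_
  rintro ⟨⟨⟨x, y⟩, v, w⟩, _⟩ ⟨⟨⟨x', y'⟩, v', w'⟩, _⟩ h
  simp only [Prod.mk.injEq, SimpleGraph.Dart.ext_iff] at h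
  obtain ⟨⟨rfl, rfl⟩, rfl, rfl⟩ := h
  rfl

variable [LinearOrder V] {G : SimpleGraph V}

/-- The readings `⟨(x, y), (v, w)⟩` of the four-cycles `x v y w` of `G` with `x < y`. -/
noncomputable def rooted (G : SimpleGraph V) : Finset (Σ _ : V × V, V × V) :=
  ({p | p.1 < p.2} : Finset (V × V)).sigma fun p => (G.commonNeighbors p.1 p.2).toFinset.offDiag

lemma mem_rooted {x y v w : V} :
    ⟨(x, y), (v, w)⟩ ∈ rooted G ↔
      x < y ∧ (G.Adj x v ∧ G.Adj y v) ∧ (G.Adj x w ∧ G.Adj y w) ∧ v ≠ w := by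
  simp [rooted, SimpleGraph.mem_commonNeighbors]

lemma root_mem_rooted {A : V × V × V × V} (hA : A ∈ fourCycles G) (i j : Bool) :
    root A i j ∈ rooted G := by
  obtain ⟨a, b, c, d⟩ := A
  obtain ⟨⟨hab, hbc, hcd, hda, -, hac, -, -, hbd, -⟩, -, hlt, -, hbd'⟩ := hA
  cases i <;> cases j <;> simp [root, mem_rooted, *, hab.symm, hbc.symm, hcd.symm, hda.symm,
    hac.symm, hbd.symm]

lemma card_rooted_le : #(rooted G) ≤ 4 * (fourCycles G).ncard := by
  rw [Set.ncard_eq_toFinset_card']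
  calc #(rooted G)
      ≤ #((fourCycles G).toFinset ×ˢ (univ : Finset (Bool × Bool))) :=
        card_le_card_of_surjOn (fun q => root q.1 q.2.1 q.2.2) ?_
    _ = 4 * #(fourCycles G).toFinset := by simp [mul_comm]
  rintro ⟨⟨x, y⟩, v, w⟩ hr
  obtain ⟨hxy, ⟨hxv, hyv⟩, ⟨hxw, hyw⟩, hvw⟩ := mem_rooted.mp hr
  obtain ⟨i, j, h⟩ := exists_root_canonical (x := x) (y := y) hvw
  exact ⟨(canonical ⟨(x, y), (v, w)⟩, i, j),
    by simpa using canonical_mem_fourCycles hxy hvw hxv hyv hxw hyw, h⟩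

lemma card_filter_rooted_adj_sq_le (H : SimpleGraph V) [Fintype H.edgeSet] :
    #{r ∈ rooted G | H.Adj r.1.1 r.2.1 ∧ H.Adj r.1.2 r.2.1} ^ 2 ≤
      (2 * #H.edgeFinset) ^ 2 * #(rooted G) := by
  set P : Finset (V × V) := {p | p.1 < p.2}
  set cn : V × V → Finset V := fun p => (G.commonNeighbors p.1 p.2).toFinset
  set hn : V × V → Finset V := fun p => (H.commonNeighbors p.1 p.2).toFinset
  have hadj : #{r ∈ rooted G | H.Adj r.1.1 r.2.1 ∧ H.Adj r.1.2 r.2.1} ≤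
      ∑ p ∈ P, #(hn p) * (#(cn p) - 1) := by
    rw [rooted, filter_sigma, card_sigma]
    refine sum_le_sum fun p _ => le_of_eq_of_le ?_ (card_filter_offDiag_fst_mem_le _ _)
    simp [cn, hn, SimpleGraph.mem_commonNeighbors]
  have hwedges : ∑ p ∈ P, #(hn p) ^ 2 ≤ (2 * #H.edgeFinset) ^ 2 := by
    rw [show ∑ p ∈ P, #(hn p) ^ 2 = #(P.sigma fun p => hn p ×ˢ hn p) by
      simp [card_sigma, sq]]
    refine card_le_sq_of_forall_adj H _ fun r hr => ?_
    simp only [mem_sigma, mem_product, hn, Set.mem_toFinset,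
      SimpleGraph.mem_commonNeighbors] at hr
    exact ⟨hr.2.1.1, hr.2.2.2⟩
  have hrooted : ∑ p ∈ P, (#(cn p) - 1) ^ 2 ≤ #(rooted G) := by
    rw [rooted, card_sigma]
    refine sum_le_sum fun p _ => ?_
    rw [offDiag_card, sq, ← Nat.mul_sub_one]
    exact Nat.mul_le_mul_right _ (Nat.sub_le _ _)
  calc #{r ∈ rooted G | H.Adj r.1.1 r.2.1 ∧ H.Adj r.1.2 r.2.1} ^ 2
      ≤ (∑ p ∈ P, #(hn p) * (#(cn p) - 1)) ^ 2 := by gcongr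
    _ ≤ (∑ p ∈ P, #(hn p) ^ 2) * ∑ p ∈ P, (#(cn p) - 1) ^ 2 := sum_mul_sq_le_sq_mul_sq _ _ _
    _ ≤ (2 * #H.edgeFinset) ^ 2 * #(rooted G) := by gcongr

theorem card_fourCycles_with_two_edges_le (H : SimpleGraph V) [Fintype H.edgeSet] :
    ({A ∈ fourCycles G | ∃ e ∈ cycleEdges A, ∃ f ∈ cycleEdges A,
        e ≠ f ∧ e ∈ H.edgeSet ∧ f ∈ H.edgeSet}.ncard : ℝ) ≤
      4 * #H.edgeFinset ^ 2 + 4 * #H.edgeFinset * √(fourCycles G).ncard := by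
  set m := #H.edgeFinset
  set T := (fourCycles G).ncard
  set adj := {r ∈ rooted G | H.Adj r.1.1 r.2.1 ∧ H.Adj r.1.2 r.2.1}
  set opp := {r ∈ rooted G | H.Adj r.1.1 r.2.1 ∧ H.Adj r.1.2 r.2.2}
  have hcover : {A ∈ fourCycles G | ∃ e ∈ cycleEdges A, ∃ f ∈ cycleEdges A,
      e ≠ f ∧ e ∈ H.edgeSet ∧ f ∈ H.edgeSet} ⊆ canonical '' ↑(adj ∪ opp) := by
    rintro A ⟨hA, e, he, f, hf, hef, hHe, hHf⟩
    obtain ⟨i, j, hij⟩ := exists_root_of_two_edges H he hf hef hHe hHf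
    refine ⟨root A i j, ?_, canonical_root hA i j⟩
    simpa [adj, opp, ← and_or_left, root_mem_rooted hA] using hij
  have hadj : (#adj : ℝ) ≤ 4 * m * √T := by
    have h := (card_filter_rooted_adj_sq_le (G := G) H).trans
      (Nat.mul_le_mul_left _ card_rooted_le)
    refine (pow_le_pow_iff_left₀ (by positivity) (by positivity) two_ne_zero).mp ?_
    rw [mul_pow, Real.sq_sqrt (by positivity)]
    exact_mod_cast h.trans_eq (by ring)
  have hopp : (#opp : ℝ) ≤ 4 * m ^ 2 := by
    have h := card_le_sq_of_forall_adj H opp fun r hr => (mem_filter.mp hr).2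
    exact_mod_cast h.trans_eq (by ring)
  calc ({A ∈ fourCycles G | ∃ e ∈ cycleEdges A, ∃ f ∈ cycleEdges A,
        e ≠ f ∧ e ∈ H.edgeSet ∧ f ∈ H.edgeSet}.ncard : ℝ)
      ≤ #(adj ∪ opp) := by
        exact_mod_cast (Set.ncard_le_ncard hcover).trans
          ((Set.ncard_image_le).trans (Set.ncard_coe_finset _).le)
    _ ≤ #adj + #opp := by exact_mod_cast card_union_le _ _
    _ ≤ 4 * m ^ 2 + 4 * m * √T := by linarith

lemma edgeHeaviness_eq_card (e : Sym2 V) :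
    edgeHeaviness G e = #{A ∈ (fourCycles G).toFinset | e ∈ cycleEdges A} := by
  rw [edgeHeaviness, ← Set.ncard_coe_finset]
  congr
  ext A
  simp

lemma card_mul_le_of_le_edgeHeaviness {θ : ℝ} (s : Finset (Sym2 V))
    (hs : ∀ e ∈ s, θ ≤ edgeHeaviness G e) : #s * θ ≤ 4 * (fourCycles G).ncard := by
  have hcycle : ∀ A, #{e ∈ s | e ∈ cycleEdges A} ≤ (4 : ℝ) := fun ⟨a, b, c, d⟩ =>
    Nat.cast_le.mpr <| (card_le_card (t := {s(a, b), s(b, c), s(c, d), s(d, a)})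
      fun e he => by simpa [cycleEdges] using (mem_filter.mp he).2).trans card_le_four
  rw [Set.ncard_eq_toFinset_card', mul_comm 4]
  simpa only [nsmul_eq_mul] using card_nsmul_le_card_nsmul (fun e A => e ∈ cycleEdges A)
    (fun e he => (hs e he).trans_eq (by rw [edgeHeaviness_eq_card]; rfl)) fun A _ => hcycle A

lemma card_edgeFinset_heavyGraph_mul_le (θ : ℝ) [Fintype (heavyGraph G θ).edgeSet] :
    #(heavyGraph G θ).edgeFinset * θ ≤ 4 * (fourCycles G).ncard :=
  card_mul_le_of_le_edgeHeaviness _ fun e he => by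
    rw [SimpleGraph.mem_edgeFinset, heavyGraph, SimpleGraph.edgeSet_fromEdgeSet] at he
    exact he.1

end Counting

end FourCycle

open FourCycle in
/-- If `G` has `T ≥ 1` four-cycles and `δ ∈ (0, 1/2]`, then at most
`328·δ²·T` four-cycles of `G` contain two or more edges of heaviness at least
`√T/(4δ²)`. -/
theorem fourCycles_with_two_heavy_edges_le {V : Type*} [Fintype V] [LinearOrder V]
    (G : SimpleGraph V) (T : ℕ) (hT : T = (fourCycles G).ncard) (hT1 : 1 ≤ T)
    (δ : ℝ) (hδ0 : 0 < δ) (hδ1 : δ ≤ 1 / 2) :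
    ({A ∈ fourCycles G | ∃ e ∈ cycleEdges A, ∃ f ∈ cycleEdges A, e ≠ f ∧
        Real.sqrt T / (4 * δ ^ 2) ≤ (edgeHeaviness G e : ℝ) ∧
        Real.sqrt T / (4 * δ ^ 2) ≤ (edgeHeaviness G f : ℝ)}.ncard : ℝ)
      ≤ 328 * δ ^ 2 * T := by
  classical
  set θ := √T / (4 * δ ^ 2)
  set m : ℝ := ↑(#(heavyGraph G θ).edgeFinset)
  have hsqrtT : 0 < √T := Real.sqrt_pos.mpr (by exact_mod_cast hT1)
  have hT_sq : (T : ℝ) = √T ^ 2 := (Real.sq_sqrt (Nat.cast_nonneg T)).symm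
  have hm : m ≤ 16 * δ ^ 2 * √T := by
    rw [← mul_le_mul_iff_of_pos_right (by positivity : 0 < θ)]
    calc m * θ ≤ 4 * T := hT ▸ card_edgeFinset_heavyGraph_mul_le θ
      _ = 16 * δ ^ 2 * √T * θ := by simp only [θ]; field_simp; linear_combination 16 * hT_sq
  calc _ ≤ ({A ∈ fourCycles G | ∃ e ∈ cycleEdges A, ∃ f ∈ cycleEdges A, e ≠ f ∧
          e ∈ (heavyGraph G θ).edgeSet ∧ f ∈ (heavyGraph G θ).edgeSet}.ncard : ℝ) :=
        Nat.cast_le.mpr <| Set.ncard_le_ncard <| by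
          rintro A ⟨hA, e, he, f, hf, hef, hθe, hθf⟩
          exact ⟨hA, e, he, f, hf, hef, mem_edgeSet_heavyGraph hA he hθe,
            mem_edgeSet_heavyGraph hA hf hθf⟩
    _ ≤ 4 * m ^ 2 + 4 * m * √T := by subst hT; exact card_fourCycles_with_two_edges_le _
    _ ≤ 328 * δ ^ 2 * T := by
      have hδ2 : δ ^ 2 ≤ 1 / 4 := by nlinarith
      nlinarith [hT_sq, mul_le_mul hm hm (Nat.cast_nonneg _) (by positivity),
        mul_le_mul_of_nonneg_right hm hsqrtT.le,
        mul_le_mul_of_nonneg_right hδ2 (by positivity : 0 ≤ δ ^ 2 * √T ^ 2)]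
end

section
/- Let G be a finite simple undirected graph with T four-cycles and let δ ∈ (0, 1/2]. Then the sum, over all unordered pairs {u,v} of distinct vertices with ow(u,v) > 1/δ, of ow(u,v) is at most 8δT. -/
variable {V : Type*}

/-! The common neighbours `w < x` of `u < v` give the four-cycle `u w v x`, in which `u, v` are
opposite, so `∑ C(ow(u,v), 2) ≤ 2T`: a four-cycle has only two opposite pairs. A pair with
`k = ow(u,v) > 1/δ ≥ 2` satisfies `k ≤ 4δ C(k, 2) = 2δk(k - 1)`, because
`2δ(k - 1) > 2 - 2δ ≥ 1`. -/

theorem ncard_cycleOppPairs_le_two (A : V × V × V × V) : (cycleOppPairs A).ncard ≤ 2 :=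
  (Set.ncard_insert_le _ _).trans (by simp)

section

open Finset

variable [LinearOrder V]

theorem onionSize_le_ncard_oppPairs [Finite V] (G : SimpleGraph V) {u v : V} (huv : u < v) :
    onionSize G u v ≤ {A ∈ fourCycles G | s(u, v) ∈ cycleOppPairs A}.ncard := by
  classical
  have : Fintype V := Fintype.ofFinite V
  set N := {w | G.Adj u w ∧ G.Adj v w}.toFinset
  have hN {w : V} : w ∈ N ↔ G.Adj u w ∧ G.Adj v w := Set.mem_toFinset
  rw [onionSize, onionWidth, Set.ncard_eq_toFinset_card', ← N.card_product_filter_lt,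
    ← Set.ncard_coe_finset]
  -- `(w, x)` goes to the cycle `u w v x`, rotated so that its least vertex comes first
  let cycle (q : V × V) : V × V × V × V := if u < q.1 then (u, q.1, v, q.2) else (q.1, u, q.2, v)
  let ends (A : V × V × V × V) : V × V := if A.1 = u then (A.2.1, A.2.2.2) else (A.1, A.2.2.1)
  have hcycle : ∀ q ∈ (({q ∈ N ×ˢ N | q.1 < q.2} : Finset (V × V)) : Set (V × V)),
      cycle q ∈ {A ∈ fourCycles G | s(u, v) ∈ cycleOppPairs A} ∧ ends (cycle q) = q := by
    rintro ⟨w, x⟩ hq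
    simp only [coe_filter, mem_product, hN, Set.mem_ofPred_eq] at hq
    obtain ⟨⟨⟨huw, hvw⟩, hux, hvx⟩, hwx⟩ := hq
    by_cases h : u < w
    · simp only [cycle, if_pos h]
      exact ⟨⟨⟨⟨huw, hvw.symm, hvx, hux.symm, huw.ne, huv.ne, hux.ne, hvw.ne', hwx.ne, hvx.ne⟩,
        h, huv, h.trans hwx, hwx⟩, by simp [cycleOppPairs]⟩, by simp [ends]⟩
    · have hwu : w < u := lt_of_le_of_ne (not_lt.1 h) huw.ne'
      simp only [cycle, if_neg h]
      exact ⟨⟨⟨⟨huw.symm, hux, hvx.symm, hvw, huw.ne', hwx.ne, hvw.ne', hux.ne, huv.ne, hvx.ne'⟩,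
        hwu, hwx, hwu.trans huv, huv⟩, by simp [cycleOppPairs]⟩, by simp [ends, hwu.ne]⟩
  exact Set.ncard_le_ncard_of_injOn cycle (fun q hq => (hcycle q hq).1)
    (Set.LeftInvOn.injOn fun q hq => (hcycle q hq).2)

theorem Set.ncard_setOf_lt_mk_mem_le {S : Set (Sym2 V)} (hS : S.Finite) :
    {p : V × V | p.1 < p.2 ∧ s(p.1, p.2) ∈ S}.ncard ≤ S.ncard := by
  refine Set.ncard_le_ncard_of_injOn (fun p => s(p.1, p.2)) (fun p hp => hp.2) ?_ hS
  rintro ⟨a, b⟩ hab ⟨c, d⟩ hcd h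
  rcases Sym2.eq_iff.1 h with ⟨rfl, rfl⟩ | ⟨rfl, rfl⟩
  · rfl
  · exact absurd (hab.1.trans hcd.1) (lt_irrefl a)

theorem sum_ncard_oppPairs_le [Fintype V] (G : SimpleGraph V) :
    ∑ p : V × V with p.1 < p.2, {A ∈ fourCycles G | s(p.1, p.2) ∈ cycleOppPairs A}.ncard
      ≤ 2 * (fourCycles G).ncard := by
  classical
  set r : V × V → V × V × V × V → Prop := fun p A => s(p.1, p.2) ∈ cycleOppPairs A
  set pairs : Finset (V × V) := {p | p.1 < p.2}
  set cycles := (fourCycles G).toFinset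
  calc ∑ p ∈ pairs, {A ∈ fourCycles G | r p A}.ncard
      = ∑ p ∈ pairs, #(cycles.bipartiteAbove r p) := by
        refine sum_congr rfl fun p _ => ?_
        simp [← Set.ncard_coe_finset, cycles]
    _ = ∑ A ∈ cycles, #(pairs.bipartiteBelow r A) :=
        sum_card_bipartiteAbove_eq_sum_card_bipartiteBelow r
    _ ≤ ∑ _A ∈ cycles, 2 := sum_le_sum fun A _ => by
        simpa [← Set.ncard_coe_finset, pairs] using
          (Set.ncard_setOf_lt_mk_mem_le (Set.toFinite _)).trans (ncard_cycleOppPairs_le_two A)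
    _ = 2 * (fourCycles G).ncard := by
        rw [sum_const, smul_eq_mul, mul_comm, Set.ncard_eq_toFinset_card']

theorem sum_onionSize_le [Fintype V] (G : SimpleGraph V) :
    ∑ p : V × V with p.1 < p.2, onionSize G p.1 p.2 ≤ 2 * (fourCycles G).ncard :=
  (sum_le_sum fun _ hp => onionSize_le_ncard_oppPairs G (mem_filter.1 hp).2).trans
    (sum_ncard_oppPairs_le G)

end

theorem le_four_mul_mul_choose_two {k : ℕ} {δ : ℝ} (hδ : δ ≤ 1 / 2) (hk : 1 < k * δ) :
    (k : ℝ) ≤ 4 * δ * k.choose 2 := by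
  have hk2 : (2 : ℝ) < k := by nlinarith
  rw [Nat.cast_choose_two]
  nlinarith

/-- For `δ ∈ (0, 1/2]`, the sum, over all unordered pairs `{u,v}` of
distinct vertices with `ow(u,v) > 1/δ`, of `ow(u,v)` is at most `8δT`, where `T` is
the number of four-cycles of `G`. -/
theorem sum_large_onionWidth_le {V : Type*} [Fintype V] [LinearOrder V]
    (G : SimpleGraph V) (T : ℕ) (hT : T = (fourCycles G).ncard)
    (δ : ℝ) (hδ0 : 0 < δ) (hδ1 : δ ≤ 1 / 2) :
    ∑ᶠ p ∈ {p : V × V | p.1 < p.2 ∧ 1 / δ < (onionWidth G p.1 p.2 : ℝ)},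
        (onionWidth G p.1 p.2 : ℝ)
      ≤ 8 * δ * T := by
  classical
  rw [finsum_mem_eq_toFinset_sum, Set.toFinset_ofPred]
  calc _ ≤ ∑ p : V × V with p.1 < p.2 ∧ 1 / δ < (onionWidth G p.1 p.2 : ℝ),
          4 * δ * (onionSize G p.1 p.2 : ℝ) :=
        Finset.sum_le_sum fun p hp =>
          le_four_mul_mul_choose_two hδ1 ((div_lt_iff₀ hδ0).1 (Finset.mem_filter.1 hp).2.2)
    _ ≤ ∑ p : V × V with p.1 < p.2, 4 * δ * (onionSize G p.1 p.2 : ℝ) :=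
        Finset.sum_le_sum_of_subset_of_nonneg (Finset.monotone_filter_right _ fun _ _ h => h.1)
          fun _ _ _ => by positivity
    _ ≤ 4 * δ * (2 * T) := by
        rw [← Finset.mul_sum, hT]
        gcongr
        exact_mod_cast sum_onionSize_le G
    _ = 8 * δ * T := by ring
end

section
/- Let G be a finite simple undirected graph with T four-cycles, let θ₁, θ₂ > 0 and r ≥ 0 be real numbers. Then the number of four-cycles A of G containing two vertices v and y such that (v,y) is an edge of A, t(v) ≥ θ₁, t(y) ≥ θ₂, and t((v,y)) ≤ r, is at most 16·r·T²/(θ₁·θ₂). -/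
variable {V : Type*}

/-! Every counted four-cycle contains an edge `xy` with `t(x) ≥ θ₁`, `t(y) ≥ θ₂` and
`t(xy) ≤ r`, and each such edge lies in at most `r` four-cycles. Since every four-cycle has
four vertices, `∑ t(v) = 4T`, so by Markov's inequality there are at most `4T/θᵢ` vertices
with `t(v) ≥ θᵢ`, hence at most `16T²/(θ₁θ₂)` candidate edges. -/

open Finset

theorem Set.ncard_le_card_mul_of_subset_biUnion {α ι : Type*} [Finite α] {S : Set α}
    {H : Finset ι} {E : ι → Set α} {r : ℝ} (hS : S ⊆ ⋃ i ∈ H, E i)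
    (hE : ∀ i ∈ H, ((E i).ncard : ℝ) ≤ r) :
    (S.ncard : ℝ) ≤ #H * r := by
  calc (S.ncard : ℝ) ≤ (⋃ i ∈ H, E i).ncard := by exact_mod_cast Set.ncard_le_ncard hS
    _ ≤ ∑ i ∈ H, ((E i).ncard : ℝ) := by exact_mod_cast H.set_ncard_biUnion_le E
    _ ≤ #H * r := by simpa using H.sum_le_card_nsmul _ r hE

theorem IsC4.ncard_verts {G : SimpleGraph V} {a b c d : V} (h : IsC4 G a b c d) :
    ({a, b, c, d} : Set V).ncard = 4 := by
  obtain ⟨-, -, -, -, hab, hac, had, hbc, hbd, hcd⟩ := h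
  rw [Set.ncard_insert_of_notMem (by simp [hab, hac, had]),
    Set.ncard_insert_of_notMem (by simp [hbc, hbd]), Set.ncard_pair hcd]

section Heaviness

variable [Fintype V] [LinearOrder V] (G : SimpleGraph V)

theorem sum_vertexHeaviness : ∑ v, vertexHeaviness G v = 4 * (fourCycles G).ncard := by
  classical
  set C := (fourCycles G).toFinset
  have hdouble := sum_card_bipartiteAbove_eq_sum_card_bipartiteBelow
    (s := univ) (t := C) (r := fun v A => v ∈ cycleVerts A)
  have habove : ∀ v, #(bipartiteAbove (fun v A => v ∈ cycleVerts A) C v) =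
      vertexHeaviness G v := by
    intro v
    rw [vertexHeaviness, ← Set.ncard_coe_finset]
    congr 1
    ext A
    simp [bipartiteAbove, C]
  have hbelow : ∀ A ∈ C, #(bipartiteBelow (fun v A => v ∈ cycleVerts A) univ A) = 4 := by
    intro A hA
    rw [← Set.ncard_coe_finset, ← (Set.mem_toFinset.1 hA).1.ncard_verts]
    congr 1
    ext v
    simp [bipartiteBelow, cycleVerts]
  simp only [habove] at hdouble
  rw [hdouble, sum_congr rfl hbelow, sum_const, smul_eq_mul, mul_comm,
    Set.ncard_eq_toFinset_card']

theorem mul_card_heavyVertices_le (θ : ℝ) :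
    θ * #{v | θ ≤ (vertexHeaviness G v : ℝ)} ≤ 4 * (fourCycles G).ncard := by
  classical
  calc θ * #{v | θ ≤ (vertexHeaviness G v : ℝ)}
      ≤ ∑ v ∈ {v | θ ≤ (vertexHeaviness G v : ℝ)}, (vertexHeaviness G v : ℝ) := by
        simpa [mul_comm] using card_nsmul_le_sum _ _ θ (fun v hv => (mem_filter.1 hv).2)
    _ ≤ ∑ v, (vertexHeaviness G v : ℝ) :=
        sum_le_sum_of_subset_of_nonneg (subset_univ _) (fun _ _ _ => by positivity)
    _ = 4 * (fourCycles G).ncard := by exact_mod_cast sum_vertexHeaviness G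

end Heaviness

/-- For reals `θ₁, θ₂ > 0` and `r ≥ 0`, the number of four-cycles `A`
of `G` containing two vertices `v`, `y` such that `(v,y)` is an edge of `A`,
`t(v) ≥ θ₁`, `t(y) ≥ θ₂` and `t((v,y)) ≤ r` is at most `16·r·T²/(θ₁·θ₂)`, where `T`
is the number of four-cycles of `G`. -/
theorem fourCycles_heavy_adjacent_pair_le {V : Type*} [Fintype V] [LinearOrder V]
    (G : SimpleGraph V) (T : ℕ) (hT : T = (fourCycles G).ncard)
    (θ₁ θ₂ r : ℝ) (hθ₁ : 0 < θ₁) (hθ₂ : 0 < θ₂) (hr : 0 ≤ r) :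
    ({A ∈ fourCycles G | ∃ x y : V, x ∈ cycleVerts A ∧ y ∈ cycleVerts A ∧
        s(x, y) ∈ cycleEdges A ∧
        θ₁ ≤ (vertexHeaviness G x : ℝ) ∧ θ₂ ≤ (vertexHeaviness G y : ℝ) ∧
        (edgeHeaviness G s(x, y) : ℝ) ≤ r}.ncard : ℝ)
      ≤ 16 * r * T ^ 2 / (θ₁ * θ₂) := by
  classical
  set H₁ : Finset V := {v | θ₁ ≤ (vertexHeaviness G v : ℝ)}
  set H₂ : Finset V := {v | θ₂ ≤ (vertexHeaviness G v : ℝ)}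
  set L := (H₁ ×ˢ H₂).filter fun p => (edgeHeaviness G s(p.1, p.2) : ℝ) ≤ r
  have hL : (#L : ℝ) ≤ #H₁ * #H₂ := by
    exact_mod_cast (card_filter_le _ _).trans (card_product _ _).le
  have h₁ := mul_card_heavyVertices_le G θ₁
  have h₂ := mul_card_heavyVertices_le G θ₂
  rw [← hT] at h₁ h₂
  rw [le_div_iff₀ (by positivity)]
  calc _ ≤ (#L * r) * (θ₁ * θ₂) := by
        refine mul_le_mul_of_nonneg_right (Set.ncard_le_card_mul_of_subset_biUnion (H := L)
          (E := fun p => {A ∈ fourCycles G | s(p.1, p.2) ∈ cycleEdges A}) ?_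
          fun p hp => (mem_filter.1 hp).2) (by positivity)
        rintro A ⟨hA, x, y, -, -, hxy, hx, hy, hlight⟩
        exact Set.mem_biUnion (x := (x, y)) (by simp [L, H₁, H₂, hx, hy, hlight]) ⟨hA, hxy⟩
    _ ≤ (#H₁ * #H₂ * r) * (θ₁ * θ₂) := by gcongr
    _ = r * ((θ₁ * #H₁) * (θ₂ * #H₂)) := by ring
    _ ≤ r * ((4 * T) * (4 * T)) := by gcongr
    _ = 16 * r * T ^ 2 := by ring
end

section
/- Let G be a finite simple undirected graph with T ≥ 1 four-cycles, let δ ∈ (0, 1/2] and let κ > 0 be a real number. Then at most 32δT four-cycles of G contain an edge e with t(e) ≥ κ²/(4δ²) and an edge f vertex-disjoint from e with t(f) ≥ T/(κ²δ²). -/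
variable {V : Type*}

/-!
Let `E₁`, `E₂` be the edges of heaviness at least `θ₁ = κ²/(4δ²)` and `θ₂ = T/(κ²δ²)`. Every
four-cycle has at most four edges, so double counting edge–cycle incidences gives `|Eᵢ| θᵢ ≤ 4T`,
whence `|E₁| |E₂| ≤ 16T²/(θ₁θ₂) = 64δ⁴T`. Two vertex-disjoint edges of a four-cycle cover its
vertex set, and a canonically ordered four-cycle is determined by its vertex set and its third
vertex; hence a pair of disjoint edges lies on at most four four-cycles, and the cycles in question
number at most `256δ⁴T ≤ 32δT`, because `δ³ ≤ 1/8`.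
-/

lemma Set.ncard_le_four {α : Type*} (a b c d : α) : ({a, b, c, d} : Set α).ncard ≤ 4 := by
  classical
  simpa [← Set.ncard_coe_finset] using Finset.card_le_four (a := a) (b := b) (c := c) (d := d)

lemma finite_cycleEdges (A : V × V × V × V) : (cycleEdges A).Finite :=
  Set.toFinite {_, _, _, _}

lemma ncard_cycleEdges_le (A : V × V × V × V) : (cycleEdges A).ncard ≤ 4 :=
  Set.ncard_le_four _ _ _ _

lemma cycleVerts_eq_of_disjoint_mem_cycleEdges {A : V × V × V × V} {e f : Sym2 V}
    (he : e ∈ cycleEdges A) (hf : f ∈ cycleEdges A) (hd : ∀ x, x ∈ e → x ∉ f) :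
    cycleVerts A = {x | x ∈ e ∨ x ∈ f} := by
  obtain ⟨a, b, c, d⟩ := A
  simp only [cycleEdges, Set.mem_insert_iff, Set.mem_singleton_iff] at he hf
  ext x
  rcases he with rfl | rfl | rfl | rfl <;> rcases hf with rfl | rfl | rfl | rfl <;>
    simp [cycleVerts] at hd ⊢ <;> tauto

section
variable [LinearOrder V] {G : SimpleGraph V}

lemma eq_of_cycleVerts_eq {A B : V × V × V × V} (hA : A ∈ fourCycles G) (hB : B ∈ fourCycles G)
    (hV : cycleVerts A = cycleVerts B) (hc : A.2.2.1 = B.2.2.1) : A = B := by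
  obtain ⟨a, b, c, d⟩ := A
  obtain ⟨a', b', c', d'⟩ := B
  obtain ⟨⟨-, -, -, -, hab, hac, had, hbc, hbd, hcd⟩, h1, h2, h3, h4⟩ := hA
  obtain ⟨⟨-, -, -, -, hab', hac', had', hbc', hbd', hcd'⟩, h1', h2', h3', h4'⟩ := hB
  simp only [cycleVerts, Set.ext_iff, Set.mem_insert_iff, Set.mem_singleton_iff] at hV hc ⊢
  subst hc
  -- `a` is the least vertex, and `b < d` are the two vertices other than `a` and `c`.
  have ha := hV a
  have ha' := hV a'
  have hb := hV b
  have hb' := hV b'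
  have hd := hV d
  have hd' := hV d'
  grind

lemma ncard_fourCycles_through_disjoint_edges_le (e f : Sym2 V) :
    {A ∈ fourCycles G | e ∈ cycleEdges A ∧ f ∈ cycleEdges A ∧ ∀ x, x ∈ e → x ∉ f}.ncard ≤ 4 := by
  set S := {A ∈ fourCycles G | e ∈ cycleEdges A ∧ f ∈ cycleEdges A ∧ ∀ x, x ∈ e → x ∉ f}
  obtain hS | ⟨A₀, hA₀⟩ := S.eq_empty_or_nonempty
  · simp [hS]
  have hverts : ∀ A ∈ S, cycleVerts A = cycleVerts A₀ := by
    rintro A ⟨-, he, hf, hd⟩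
    rw [cycleVerts_eq_of_disjoint_mem_cycleEdges he hf hd,
      cycleVerts_eq_of_disjoint_mem_cycleEdges hA₀.2.1 hA₀.2.2.1 hA₀.2.2.2]
  calc S.ncard ≤ (cycleVerts A₀).ncard :=
        Set.ncard_le_ncard_of_injOn (·.2.2.1)
          (fun A hA => hverts A hA ▸ by simp [cycleVerts])
          (fun A hA B hB => eq_of_cycleVerts_eq hA.1 hB.1 ((hverts A hA).trans (hverts B hB).symm))
          (Set.toFinite {_, _, _, _})
    _ ≤ 4 := Set.ncard_le_four _ _ _ _

lemma finite_setOf_le_edgeHeaviness (hC : (fourCycles G).Finite) {θ : ℝ} (hθ : 0 < θ) :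
    {e | θ ≤ (edgeHeaviness G e : ℝ)}.Finite := by
  refine (hC.biUnion fun A _ => finite_cycleEdges A).subset fun e he => ?_
  have hpos : 0 < edgeHeaviness G e := by exact_mod_cast hθ.trans_le he
  obtain ⟨A, hA, heA⟩ := Set.nonempty_of_ncard_ne_zero hpos.ne'
  exact Set.mem_biUnion hA heA

lemma ncard_setOf_le_edgeHeaviness_mul_le (hC : (fourCycles G).Finite) {θ : ℝ} (hθ : 0 < θ) :
    ({e | θ ≤ (edgeHeaviness G e : ℝ)}.ncard : ℝ) * θ ≤ 4 * (fourCycles G).ncard := by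
  classical
  have hE := finite_setOf_le_edgeHeaviness hC hθ
  let r (e : Sym2 V) (A : V × V × V × V) : Prop := e ∈ cycleEdges A
  have hheavy : ∀ e ∈ hE.toFinset, θ ≤ ((hC.toFinset.bipartiteAbove r e).card : ℝ) := by
    intro e he
    have hcard : (hC.toFinset.bipartiteAbove r e).card = edgeHeaviness G e := by
      rw [edgeHeaviness, ← Set.ncard_coe_finset]
      simp [r]
    simpa [hcard] using he
  have hsparse : ∀ A ∈ hC.toFinset, ((hE.toFinset.bipartiteBelow r A).card : ℝ) ≤ 4 := by
    intro A _
    rw [← Set.ncard_coe_finset]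
    exact_mod_cast (Set.ncard_le_ncard (fun e he => ((Finset.mem_bipartiteBelow _).1 he).2)
      (finite_cycleEdges A)).trans (ncard_cycleEdges_le A)
  have key := Finset.card_nsmul_le_card_nsmul r hheavy hsparse
  rw [Set.ncard_eq_toFinset_card _ hE, Set.ncard_eq_toFinset_card _ hC]
  simpa [nsmul_eq_mul, mul_comm] using key

lemma ncard_fourCycles_with_disjoint_edges_le (hC : (fourCycles G).Finite) {E F : Set (Sym2 V)}
    (hE : E.Finite) (hF : F.Finite) :
    {A ∈ fourCycles G | ∃ e ∈ cycleEdges A, ∃ f ∈ cycleEdges A,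
      e ∈ E ∧ f ∈ F ∧ ∀ x, x ∈ e → x ∉ f}.ncard ≤ 4 * (E.ncard * F.ncard) := by
  classical
  let P := hE.toFinset ×ˢ hF.toFinset
  let cyclesThrough (p : Sym2 V × Sym2 V) : Set (V × V × V × V) :=
    {A ∈ fourCycles G | p.1 ∈ cycleEdges A ∧ p.2 ∈ cycleEdges A ∧ ∀ x, x ∈ p.1 → x ∉ p.2}
  calc _ ≤ (⋃ p ∈ P, cyclesThrough p).ncard := by
        refine Set.ncard_le_ncard ?_ (hC.subset (Set.iUnion₂_subset fun _ _ => Set.sep_subset _ _))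
        rintro A ⟨hA, e, he, f, hf, heE, hfF, hd⟩
        simp only [Set.mem_iUnion]
        exact ⟨(e, f), by simp [P, heE, hfF], hA, he, hf, hd⟩
    _ ≤ ∑ p ∈ P, (cyclesThrough p).ncard := Finset.set_ncard_biUnion_le _ _
    _ ≤ ∑ _p ∈ P, 4 :=
        Finset.sum_le_sum fun p _ => ncard_fourCycles_through_disjoint_edges_le p.1 p.2
    _ = 4 * (E.ncard * F.ncard) := by
        simp [P, Set.ncard_eq_toFinset_card _ hE, Set.ncard_eq_toFinset_card _ hF, mul_comm]

end

theorem fourCycles_two_disjoint_heavy_edges_le_general {V : Type*}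
    [LinearOrder V] (G : SimpleGraph V)
    (T : ℕ) (hT : T = (fourCycles G).ncard) (hT1 : 1 ≤ T)
    (δ : ℝ) (hδ0 : 0 < δ) (hδ1 : δ ≤ 1 / 2) (κ : ℝ) (hκ : 0 < κ) :
    ({A ∈ fourCycles G | ∃ e ∈ cycleEdges A, ∃ f ∈ cycleEdges A,
        κ ^ 2 / (4 * δ ^ 2) ≤ (edgeHeaviness G e : ℝ) ∧
        (T : ℝ) / (κ ^ 2 * δ ^ 2) ≤ (edgeHeaviness G f : ℝ) ∧
        (∀ x, x ∈ e → x ∉ f)}.ncard : ℝ)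
      ≤ 32 * δ * T := by
  have hC : (fourCycles G).Finite := Set.finite_of_ncard_pos (hT ▸ hT1)
  have hTpos : (0 : ℝ) < T := by exact_mod_cast hT1
  have hθ₁ : 0 < κ ^ 2 / (4 * δ ^ 2) := by positivity
  have hθ₂ : 0 < (T : ℝ) / (κ ^ 2 * δ ^ 2) := by positivity
  have hE₁ := ncard_setOf_le_edgeHeaviness_mul_le hC hθ₁
  have hE₂ := ncard_setOf_le_edgeHeaviness_mul_le hC hθ₂
  have hS := ncard_fourCycles_with_disjoint_edges_le hC
    (finite_setOf_le_edgeHeaviness hC hθ₁) (finite_setOf_le_edgeHeaviness hC hθ₂)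
  rw [← hT] at hE₁ hE₂
  set x : ℝ := ({e | κ ^ 2 / (4 * δ ^ 2) ≤ (edgeHeaviness G e : ℝ)}.ncard : ℝ)
  set y : ℝ := ({e | (T : ℝ) / (κ ^ 2 * δ ^ 2) ≤ (edgeHeaviness G e : ℝ)}.ncard : ℝ)
  have hxy : x * y ≤ 64 * δ ^ 4 * T := by
    have := mul_le_mul hE₁ hE₂ (by positivity) (by positivity)
    field_simp at this
    nlinarith
  have hδ3 : δ ^ 3 ≤ 1 / 8 := by nlinarith
  calc _ ≤ ((4 * (_ * _) : ℕ) : ℝ) := Nat.cast_le.mpr hS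
    _ = 4 * (x * y) := by push_cast; rfl
    _ ≤ 4 * (64 * δ ^ 4 * T) := by gcongr
    _ ≤ 32 * δ * T := by nlinarith [mul_le_mul_of_nonneg_left hδ3 (by positivity : (0 : ℝ) ≤ δ * T)]

/-- If `G` has `T ≥ 1` four-cycles, `δ ∈ (0, 1/2]` and `κ > 0`, then
at most `32δT` four-cycles of `G` contain an edge `e` with `t(e) ≥ κ²/(4δ²)` and an
edge `f` vertex-disjoint from `e` with `t(f) ≥ T/(κ²δ²)`. -/
theorem fourCycles_two_disjoint_heavy_edges_le {V : Type*} [Fintype V]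
    [LinearOrder V] (G : SimpleGraph V)
    (T : ℕ) (hT : T = (fourCycles G).ncard) (hT1 : 1 ≤ T)
    (δ : ℝ) (hδ0 : 0 < δ) (hδ1 : δ ≤ 1 / 2) (κ : ℝ) (hκ : 0 < κ) :
    ({A ∈ fourCycles G | ∃ e ∈ cycleEdges A, ∃ f ∈ cycleEdges A,
        κ ^ 2 / (4 * δ ^ 2) ≤ (edgeHeaviness G e : ℝ) ∧
        (T : ℝ) / (κ ^ 2 * δ ^ 2) ≤ (edgeHeaviness G f : ℝ) ∧
        (∀ x, x ∈ e → x ∉ f)}.ncard : ℝ)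
      ≤ 32 * δ * T :=
  fourCycles_two_disjoint_heavy_edges_le_general G T hT hT1 δ hδ0 hδ1 κ hκ
end

section
/- Let G be a finite simple undirected graph with T ≥ 1 four-cycles, let δ ∈ (0, 1/2] and let κ > 0 be a real number. Then at most 32δT four-cycles of G contain a vertex v with t(v) ≥ κ√T/(2δ^{1.5}) and a wedge ∧, vertex-disjoint from v, with t(∧) ≥ √T/(κδ). -/
/-!
A four-cycle containing a vertex `v` and a wedge `∧` vertex-disjoint from `v` is determined by the
pair `(v, ∧)`: `v` is the vertex opposite the centre of `∧`. So such cycles number at most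
`#{heavy vertices} * #{heavy wedges}`. Every four-cycle has four vertices and four wedges, so the
heavinesses of vertices, and those of wedges, each sum to at most `4T`; by Markov's inequality
there are at most `4T/H` vertices of heaviness `≥ H` and `4T/W` wedges of heaviness `≥ W`. For
the given thresholds `16T²/(HW) = 32 δ^{2.5} T ≤ 32 δ T`.
-/

variable {V : Type*}

open Finset

lemma sum_ncard_filter_mem_le {α β : Type*} [Fintype β] {C : Set α} (hC : C.Finite)
    (m : α → Set β) {k : ℕ} (hm : ∀ a ∈ C, (m a).ncard ≤ k) :
    ∑ b, {a ∈ C | b ∈ m a}.ncard ≤ k * C.ncard := by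
  classical
  calc ∑ b, {a ∈ C | b ∈ m a}.ncard
      = ∑ b, #(hC.toFinset.bipartiteAbove (fun b a => b ∈ m a) b) := by
        refine sum_congr rfl fun b _ => ?_
        simp only [← Set.ncard_coe_finset, coe_bipartiteAbove, Set.Finite.mem_toFinset]
    _ = ∑ a ∈ hC.toFinset, #(univ.bipartiteBelow (fun b a => b ∈ m a) a) :=
        sum_card_bipartiteAbove_eq_sum_card_bipartiteBelow _
    _ ≤ ∑ _a ∈ hC.toFinset, k := sum_le_sum fun a ha => by
        simp only [← Set.ncard_coe_finset, coe_bipartiteBelow, mem_univ, true_and,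
          Set.ofPred_mem_eq]
        exact hm a (hC.mem_toFinset.1 ha)
    _ = k * C.ncard := by rw [sum_const, smul_eq_mul, Set.ncard_eq_toFinset_card C hC, mul_comm]

lemma card_filter_le_mul_le_sum {ι : Type*} [Fintype ι] (f : ι → ℕ) (c : ℝ) :
    (#{i | c ≤ (f i : ℝ)} : ℝ) * c ≤ ∑ i, (f i : ℝ) :=
  calc (#{i | c ≤ (f i : ℝ)} : ℝ) * c = #{i | c ≤ (f i : ℝ)} • c := by rw [nsmul_eq_mul]
    _ ≤ ∑ i ∈ {i | c ≤ (f i : ℝ)}, (f i : ℝ) :=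
        card_nsmul_le_sum _ _ _ fun i hi => (mem_filter.1 hi).2
    _ ≤ ∑ i, (f i : ℝ) := sum_le_univ_sum_of_nonneg fun i => Nat.cast_nonneg _

lemma mul_le_sq_div_of_mul_le_of_mul_le {a b H W N : ℝ} (ha : 0 ≤ a) (hb : 0 ≤ b) (hH : 0 < H)
    (hW : 0 < W) (haH : a * H ≤ N) (hbW : b * W ≤ N) : a * b ≤ N ^ 2 / (H * W) := by
  rw [le_div_iff₀ (mul_pos hH hW)]
  calc a * b * (H * W) = (a * H) * (b * W) := by ring
    _ ≤ N * N := mul_le_mul haH hbW (by positivity) ((mul_nonneg ha hH.le).trans haH)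
    _ = N ^ 2 := (sq N).symm

lemma ncard_cycleVerts_le (t : V × V × V × V) : (cycleVerts t).ncard ≤ 4 := by
  classical
  obtain ⟨a, b, c, d⟩ := t
  simpa [cycleVerts] using (Set.ncard_coe_finset {a, b, c, d}).le.trans card_le_four

lemma ncard_cycleWedges_le (t : V × V × V × V) : (cycleWedges t).ncard ≤ 4 := by
  classical
  obtain ⟨a, b, c, d⟩ := t
  simpa [cycleWedges] using (Set.ncard_coe_finset
    {(b, s(a, c)), (c, s(b, d)), (d, s(c, a)), (a, s(d, b))}).le.trans card_le_four

section Heavy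

variable [Fintype V] [LinearOrder V] (G : SimpleGraph V)

lemma sum_vertexHeaviness_le : ∑ v, vertexHeaviness G v ≤ 4 * (fourCycles G).ncard :=
  sum_ncard_filter_mem_le (Set.toFinite _) _ fun t _ => ncard_cycleVerts_le t

lemma sum_wedgeHeaviness_le : ∑ w, wedgeHeaviness G w ≤ 4 * (fourCycles G).ncard :=
  sum_ncard_filter_mem_le (Set.toFinite _) _ fun t _ => ncard_cycleWedges_le t

noncomputable def heavyVertices (H : ℝ) : Finset V := {v | H ≤ (vertexHeaviness G v : ℝ)}

noncomputable def heavyWedges (W : ℝ) : Finset (V × Sym2 V) :=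
  {w | W ≤ (wedgeHeaviness G w : ℝ)}

lemma card_heavyVertices_mul_le (H : ℝ) :
    (#(heavyVertices G H) : ℝ) * H ≤ 4 * (fourCycles G).ncard := by
  refine (card_filter_le_mul_le_sum _ H).trans ?_
  exact_mod_cast sum_vertexHeaviness_le G

lemma card_heavyWedges_mul_le (W : ℝ) :
    (#(heavyWedges G W) : ℝ) * W ≤ 4 * (fourCycles G).ncard := by
  refine (card_filter_le_mul_le_sum _ W).trans ?_
  exact_mod_cast sum_wedgeHeaviness_le G

end Heavy

-- `v` is opposite the centre `w.1`; the canonical representative starts at the least vertex.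
def cycleOfVertexWedge [LinearOrder V] (v : V) (w : V × Sym2 V) : V × V × V × V :=
  if min v w.1 < w.2.inf then (min v w.1, w.2.inf, max v w.1, w.2.sup)
  else (w.2.inf, min v w.1, w.2.sup, max v w.1)

lemma cycleOfVertexWedge_eq [LinearOrder V] {G : SimpleGraph V} {A : V × V × V × V}
    (hA : A ∈ fourCycles G) {v : V} {w : V × Sym2 V}
    (hv : v ∈ cycleVerts A) (hw : w ∈ cycleWedges A) (hvw : v ∉ wedgeVerts w) :
    cycleOfVertexWedge v w = A := by
  obtain ⟨a, b, c, d⟩ := A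
  obtain ⟨⟨-, -, -, -, hab, hac, had, hbc, hbd, hcd⟩, o1, o2, o3, o4⟩ := hA
  simp only [cycleVerts, Set.mem_insert_iff, Set.mem_singleton_iff] at hv
  simp only [cycleWedges, Set.mem_insert_iff, Set.mem_singleton_iff] at hw
  rcases hw with rfl | rfl | rfl | rfl <;>
    simp only [wedgeVerts, Set.mem_insert_iff, Set.mem_ofPred_eq, Sym2.mem_iff, not_or] at hvw <;>
    rcases hv with rfl | rfl | rfl | rfl <;>
    simp only [cycleOfVertexWedge, Sym2.inf_mk, Sym2.sup_mk] <;>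
    grind

lemma ncard_heavy_vertex_disjoint_heavy_wedge_le [Fintype V] [LinearOrder V]
    (G : SimpleGraph V) (H W : ℝ) :
    {A ∈ fourCycles G | ∃ v ∈ cycleVerts A, ∃ w ∈ cycleWedges A,
        H ≤ (vertexHeaviness G v : ℝ) ∧ W ≤ (wedgeHeaviness G w : ℝ) ∧
        v ∉ wedgeVerts w}.ncard ≤ #(heavyVertices G H) * #(heavyWedges G W) := by
  have hcover : {A ∈ fourCycles G | ∃ v ∈ cycleVerts A, ∃ w ∈ cycleWedges A,
      H ≤ (vertexHeaviness G v : ℝ) ∧ W ≤ (wedgeHeaviness G w : ℝ) ∧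
        v ∉ wedgeVerts w} ⊆
      (fun p : V × V × Sym2 V => cycleOfVertexWedge p.1 p.2) ''
        ↑(heavyVertices G H ×ˢ heavyWedges G W) := by
    rintro A ⟨hA, v, hv, w, hw, hHv, hWw, hvw⟩
    exact ⟨(v, w), by simp [heavyVertices, heavyWedges, hHv, hWw],
      cycleOfVertexWedge_eq hA hv hw hvw⟩
  calc _ ≤ _ := Set.ncard_le_ncard hcover (Set.toFinite _)
    _ ≤ _ := Set.ncard_image_le (Set.toFinite _)
    _ = _ := by rw [Set.ncard_coe_finset, card_product]

/-- If `G` has `T ≥ 1` four-cycles, `δ ∈ (0, 1/2]` and `κ > 0`, then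
at most `32δT` four-cycles of `G` contain a vertex `v` with `t(v) ≥ κ√T/(2δ^{1.5})`
and a wedge `∧`, vertex-disjoint from `v`, with `t(∧) ≥ √T/(κδ)`. -/
theorem fourCycles_heavy_vertex_disjoint_heavy_wedge_le {V : Type*} [Fintype V]
    [LinearOrder V] (G : SimpleGraph V)
    (T : ℕ) (hT : T = (fourCycles G).ncard) (hT1 : 1 ≤ T)
    (δ : ℝ) (hδ0 : 0 < δ) (hδ1 : δ ≤ 1 / 2) (κ : ℝ) (hκ : 0 < κ) :
    ({A ∈ fourCycles G | ∃ v ∈ cycleVerts A, ∃ w ∈ cycleWedges A,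
        κ * Real.sqrt T / (2 * δ ^ (1.5:ℝ)) ≤ (vertexHeaviness G v : ℝ) ∧
        Real.sqrt T / (κ * δ) ≤ (wedgeHeaviness G w : ℝ) ∧
        v ∉ wedgeVerts w}.ncard : ℝ)
      ≤ 32 * δ * T := by
  set H := κ * Real.sqrt T / (2 * δ ^ (1.5:ℝ))
  set W := Real.sqrt T / (κ * δ)
  have hT0 : (0 : ℝ) < T := by exact_mod_cast hT1
  have hH : 0 < H := by positivity
  have hW : 0 < W := by positivity
  have hδ15 : δ ^ (1.5:ℝ) ≤ 1 := Real.rpow_le_one hδ0.le (by linarith) (by norm_num)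
  have hVH := card_heavyVertices_mul_le G H
  have hWW := card_heavyWedges_mul_le G W
  rw [← hT] at hVH hWW
  calc _ ≤ (#(heavyVertices G H) : ℝ) * #(heavyWedges G W) := by
        exact_mod_cast ncard_heavy_vertex_disjoint_heavy_wedge_le G H W
    _ ≤ (4 * T) ^ 2 / (H * W) :=
        mul_le_sq_div_of_mul_le_of_mul_le (by positivity) (by positivity) hH hW hVH hWW
    _ = 32 * δ * T * δ ^ (1.5:ℝ) := by
        simp only [H, W]
        field_simp
        rw [Real.sq_sqrt hT0.le]
        ring
    _ ≤ 32 * δ * T := mul_le_of_le_one_right (by positivity) hδ15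
end
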